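/- arXiv:2107.10766 — 3 statements merged into one kernel-verified Lean document; each statement's English description precedes it below -/
import Mathlib

section
/- Let X be any random vector in ℝ^p and let k-max~(X) = X_{ι*} be the randomized k-max (ι* chosen uniformly from a random size-k argmax-average set A*, with external randomization independent of X). Then for every Borel set B ⊆ ℝ, P(k-max(X) ∈ B) ≤ k · P(k-max~(X) ∈ B). -/
/-! Some coordinate in the maximizing set `A*` equals `k-max(X)`: by exchanging one coordinate,
every value outside `A*` is at most every value inside it, while fewer than `k` coordinates exceed
`k-max(X)` and at least `k` reach it. Hence `{k-max(X) ∈ B}` is covered by the events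
`{X_j ∈ B, j ∈ A*}`, each of which has probability `k · P(X_j ∈ B, j ∈ A*, ι* = j)` by the
uniformity of `ι*` on `A*`; summing over `j` gives the bound. -/

open MeasureTheory ProbabilityTheory

/-- The `k`-th largest coordinate of `x ∈ ℝ^p`. -/
noncomputable def kmax {p : ℕ} (k : ℕ) (x : Fin p → ℝ) : ℝ :=
  ((List.ofFn x).insertionSort (· ≥ ·)).getD (k - 1) 0

instance {α : Type*} : MeasurableSpace (Finset α) := ⊤

open Finset

theorem Finset.apply_le_apply_of_forall_sum_le {ι M : Type*} [DecidableEq ι] [AddCommGroup M]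
    [LinearOrder M] [IsOrderedAddMonoid M] {x : ι → M} {A : Finset ι}
    (hmax : ∀ B : Finset ι, #B = #A → ∑ j ∈ B, x j ≤ ∑ j ∈ A, x j)
    {i j : ι} (hi : i ∉ A) (hj : j ∈ A) : x i ≤ x j := by
  have hi' : i ∉ A.erase j := fun h => hi (mem_of_mem_erase h)
  have hswap := hmax (insert i (A.erase j))
    (by rw [card_insert_of_notMem hi', card_erase_add_one hj])
  rw [sum_insert hi', ← add_sum_erase A x hj] at hswap
  exact le_of_add_le_add_right hswap

theorem card_filter_comp_perm {ι α : Type*} [Fintype ι] (x : ι → α) (σ : Equiv.Perm ι)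
    (q : α → Prop) [DecidablePred q] : #{i | q ((x ∘ σ) i)} = #{j | q (x j)} :=
  card_equiv σ (by simp)

section kmax

variable {p k : ℕ}

theorem exists_antitone_comp_perm_kmax_eq (hk : 1 ≤ k) (hkp : k ≤ p) (x : Fin p → ℝ) :
    ∃ σ : Equiv.Perm (Fin p), Antitone (x ∘ σ) ∧ kmax k x = x (σ ⟨k - 1, by omega⟩) := by
  set σ : Equiv.Perm (Fin p) := Fin.revPerm.trans (Tuple.sort x)
  have hanti : Antitone (x ∘ σ) := fun i j hij => Tuple.monotone_sort x (Fin.rev_le_rev.mpr hij)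
  have hsort : (List.ofFn x).insertionSort (· ≥ ·) = List.ofFn (x ∘ σ) :=
    List.Perm.eq_of_sortedGE List.sortedGE_insertionSort (List.sortedGE_ofFn_iff.mpr hanti)
      ((List.perm_insertionSort _ _).trans (σ.ofFn_comp_perm x).symm)
  refine ⟨σ, hanti, ?_⟩
  rw [kmax, hsort, List.getD_eq_getElem _ _ (by simp; omega), List.getElem_ofFn]
  rfl

theorem card_lt_kmax_lt (hk : 1 ≤ k) (hkp : k ≤ p) (x : Fin p → ℝ) :
    #{j | kmax k x < x j} < k := by
  obtain ⟨σ, hanti, hσ⟩ := exists_antitone_comp_perm_kmax_eq hk hkp x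
  have hcard := (Tuple.lt_card_gt_iff_apply_gt_of_antitone hanti (j := ⟨k - 1, by omega⟩)
    (a := kmax k x)).not.mpr (by simp [hσ])
  rw [card_filter_comp_perm x σ (kmax k x < ·)] at hcard
  simp only [not_lt] at hcard
  omega

theorem le_card_kmax_le (hk : 1 ≤ k) (hkp : k ≤ p) (x : Fin p → ℝ) :
    k ≤ #{j | kmax k x ≤ x j} := by
  obtain ⟨σ, hanti, hσ⟩ := exists_antitone_comp_perm_kmax_eq hk hkp x
  have hcard := (Tuple.lt_card_ge_iff_apply_ge_of_antitone hanti (j := ⟨k - 1, by omega⟩)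
    (a := kmax k x)).mpr (by simp [hσ])
  rw [card_filter_comp_perm x σ (kmax k x ≤ ·)] at hcard
  simp only at hcard
  omega

theorem exists_mem_eq_kmax (hk : 1 ≤ k) (x : Fin p → ℝ) {A : Finset (Fin p)}
    (hA : #A = k) (hmax : ∀ B : Finset (Fin p), #B = k → ∑ j ∈ B, x j ≤ ∑ j ∈ A, x j) :
    ∃ j ∈ A, x j = kmax k x := by
  have hkp : k ≤ p := hA ▸ card_le_univ A |>.trans_eq (Fintype.card_fin p)
  set v := kmax k x
  by_contra! hne
  have hAge : #{j ∈ A | v ≤ x j} < k := by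
    refine lt_of_le_of_lt (card_le_card fun j hj => ?_) (card_lt_kmax_lt hk hkp x)
    rw [mem_filter] at hj ⊢
    exact ⟨mem_univ j, hj.2.lt_of_ne (hne j hj.1).symm⟩
  obtain ⟨j, hjA, hj⟩ := exists_mem_notMem_of_card_lt_card (hA ▸ hAge)
  obtain ⟨i, hi, hiA⟩ :=
    exists_mem_notMem_of_card_lt_card (hAge.trans_le (le_card_kmax_le hk hkp x))
  rw [mem_filter] at hj hi hiA
  have hij := apply_le_apply_of_forall_sum_le (hA ▸ hmax) (fun h => hiA ⟨h, hi.2⟩) hjA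
  exact hj ⟨hjA, hi.2.trans hij⟩

end kmax

theorem MeasureTheory.sum_measure_inter_preimage_singleton {Ω ι : Type*} [MeasurableSpace Ω]
    [Fintype ι] [MeasurableSpace ι] [MeasurableSingletonClass ι] (μ : Measure Ω) {f : Ω → ι}
    (hf : Measurable f) (s : Set Ω) : ∑ i, μ (s ∩ f ⁻¹' {i}) = μ s := by
  simp_rw [Set.inter_comm s, ← Measure.restrict_apply (hf (measurableSet_singleton _))]
  rw [sum_measure_preimage_singleton _ fun i _ => hf (measurableSet_singleton i)]
  simp

theorem kmax_le_mul_randomized_kmax_general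
    {Ω : Type*} [MeasurableSpace Ω] (P : Measure Ω)
    {p k : ℕ} (hk : 1 ≤ k)
    (X : Ω → Fin p → ℝ)
    (Astar : Ω → Finset (Fin p))
    (istar : Ω → Fin p) (histar : Measurable istar)
    (hAcard : ∀ ω, (Astar ω).card = k)
    (hAmax : ∀ ω (B : Finset (Fin p)), B.card = k →
      (∑ j ∈ B, X ω j) / k ≤ (∑ j ∈ Astar ω, X ω j) / k)
    -- conditionally on `(X, Astar)`, `istar` is uniform on `Astar`:
    (hunif : ∀ (j : Fin p) (S : Set ((Fin p → ℝ) × Finset (Fin p))), MeasurableSet S →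
      P {ω | (X ω, Astar ω) ∈ S ∧ istar ω = j} =
        P {ω | (X ω, Astar ω) ∈ S ∧ j ∈ Astar ω} / k)
    (B : Set ℝ) (hB : MeasurableSet B) :
    P {ω | kmax k (X ω) ∈ B} ≤ k * P {ω | X ω (istar ω) ∈ B} := by
  have hkpos : (0 : ℝ) < k := by exact_mod_cast hk
  have hcover : {ω | kmax k (X ω) ∈ B} ⊆ ⋃ j, {ω | X ω j ∈ B ∧ j ∈ Astar ω} := by
    intro ω hω
    obtain ⟨j, hjA, hj⟩ := exists_mem_eq_kmax hk (X ω) (hAcard ω)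
      fun B' hB' => (div_le_div_iff_of_pos_right hkpos).mp (hAmax ω B' hB')
    exact Set.mem_iUnion.mpr ⟨j, hj ▸ hω, hjA⟩
  have hpick : ∀ j, P {ω | X ω j ∈ B ∧ j ∈ Astar ω} =
      k * P {ω | X ω j ∈ B ∧ j ∈ Astar ω ∧ istar ω = j} := by
    intro j
    have hS : MeasurableSet {q : (Fin p → ℝ) × Finset (Fin p) | q.1 j ∈ B ∧ j ∈ q.2} :=
      (measurable_pi_apply j |>.comp measurable_fst hB).inter
        (measurable_snd (MeasurableSpace.measurableSet_top (s := {A : Finset (Fin p) | j ∈ A})))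
    have h := hunif j _ hS
    simp only [Set.mem_ofPred_eq, and_assoc, and_self] at h
    rw [h, ENNReal.mul_div_cancel (Nat.cast_ne_zero.mpr (by omega)) (ENNReal.natCast_ne_top k)]
  calc P {ω | kmax k (X ω) ∈ B} ≤ ∑ j, P {ω | X ω j ∈ B ∧ j ∈ Astar ω} :=
        (measure_mono hcover).trans (measure_iUnion_fintype_le P _)
    _ = ∑ j, k * P {ω | X ω j ∈ B ∧ j ∈ Astar ω ∧ istar ω = j} := by simp_rw [hpick]
    _ ≤ ∑ j, k * P ({ω | X ω (istar ω) ∈ B} ∩ istar ⁻¹' {j}) := by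
        gcongr with j
        rintro ω ⟨hω, -, rfl⟩
        exact ⟨hω, rfl⟩
    _ = k * P {ω | X ω (istar ω) ∈ B} := by
        rw [← Finset.mul_sum, sum_measure_inter_preimage_singleton P histar]

/-- For the randomized k-max `k-max~(X) = X (istar ·)` (with `istar` uniform on the
randomized size-`k` argmax-average set `Astar`, externally randomized independently
of `X`), one has `P(k-max(X) ∈ B) ≤ k · P(k-max~(X) ∈ B)` for every Borel `B ⊆ ℝ`. -/
theorem kmax_le_mul_randomized_kmax
    {Ω : Type*} [MeasurableSpace Ω] (P : Measure Ω) [IsProbabilityMeasure P]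
    {p k : ℕ} (hk : 1 ≤ k) (hkp : k ≤ p)
    (X : Ω → Fin p → ℝ) (hX : Measurable X)
    (Astar : Ω → Finset (Fin p)) (hAstar : Measurable Astar)
    (istar : Ω → Fin p) (histar : Measurable istar)
    (hAcard : ∀ ω, (Astar ω).card = k)
    (hAmax : ∀ ω (B : Finset (Fin p)), B.card = k →
      (∑ j ∈ B, X ω j) / k ≤ (∑ j ∈ Astar ω, X ω j) / k)
    (hmem : ∀ ω, istar ω ∈ Astar ω)
    -- conditionally on `(X, Astar)`, `istar` is uniform on `Astar`:
    (hunif : ∀ (j : Fin p) (S : Set ((Fin p → ℝ) × Finset (Fin p))), MeasurableSet S →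
      P {ω | (X ω, Astar ω) ∈ S ∧ istar ω = j} =
        P {ω | (X ω, Astar ω) ∈ S ∧ j ∈ Astar ω} / k)
    (B : Set ℝ) (hB : MeasurableSet B) :
    P {ω | kmax k (X ω) ∈ B} ≤ k * P {ω | X ω (istar ω) ∈ B} :=
  kmax_le_mul_randomized_kmax_general P hk X Astar istar histar hAcard hAmax hunif B hB
end

section
/- Let X ~ N(0, Σ) in ℝ^p with E[X_j^2] = 1 for all j. Then the randomized k-max, k-max~(X), has Lebesgue density f̃_k(y) = φ(y) · G̃_k(y), where φ is the standard Gaussian density and G̃_k(y) = (1/k) ∑_{j=1}^p P(j ∈ A* | X_j = y). -/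
open MeasureTheory ProbabilityTheory

instance {α : Type*} : MeasurableSingletonClass (Finset α) := ⟨fun _ => trivial⟩

/-- `μ` is the law of a centered jointly Gaussian random vector in `ℝ^p`. -/
def IsCenteredGaussianLaw {p : ℕ} (μ : Measure (Fin p → ℝ)) : Prop :=
  ∀ c : Fin p → ℝ, ∃ v : NNReal,
    μ.map (fun x => ∑ j, c j * x j) = gaussianReal 0 v

/-- `A` is a size-`k` subset maximizing the coordinate average of `x`. -/
def IsMaxSet {p : ℕ} (k : ℕ) (x : Fin p → ℝ) (A : Finset (Fin p)) : Prop :=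
  A.card = k ∧ ∀ B : Finset (Fin p), B.card = k →
    (∑ j ∈ B, x j) / k ≤ (∑ j ∈ A, x j) / k

/-- **Lemma 1 (density formula).** For `X ~ N(0, Σ)` with unit variances, the
randomized k-max `k-max~(X) = X (istar ·)` has Lebesgue density
`f̃_k(y) = φ(y) · (1/k) ∑_j P(j ∈ A* | X_j = y)`, the conditional probability being
given by the regular conditional distribution (`condDistrib`) of `Astar` given `X_j`. -/
theorem randomized_kmax_density
    {Ω : Type*} [MeasurableSpace Ω]
    (P : Measure Ω) [IsProbabilityMeasure P]
    {p k : ℕ} (hk : 1 ≤ k) (hkp : k ≤ p)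
    (X : Ω → Fin p → ℝ) (hX : Measurable X)
    (hGauss : IsCenteredGaussianLaw (P.map X))
    (hvar : ∀ j : Fin p, P.map (fun ω => X ω j) = gaussianReal 0 1)
    (Astar : Ω → Finset (Fin p)) (hAstar : Measurable Astar)
    (istar : Ω → Fin p) (histar : Measurable istar)
    (hAmaxset : ∀ ω, IsMaxSet k (X ω) (Astar ω))
    -- `Astar` is chosen uniformly among maximizers, independently of `X`:
    (hAtie : ∀ (S : Set (Fin p → ℝ)), MeasurableSet S →
      ∀ A B : Finset (Fin p),
        P {ω | X ω ∈ S ∧ IsMaxSet k (X ω) A ∧ IsMaxSet k (X ω) B ∧ Astar ω = A} =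
          P {ω | X ω ∈ S ∧ IsMaxSet k (X ω) A ∧ IsMaxSet k (X ω) B ∧ Astar ω = B})
    (hmem : ∀ ω, istar ω ∈ Astar ω)
    -- conditionally on `(X, Astar)`, `istar` is uniform on `Astar`:
    (hunif : ∀ (j : Fin p) (S : Set ((Fin p → ℝ) × Finset (Fin p))), MeasurableSet S →
      P {ω | (X ω, Astar ω) ∈ S ∧ istar ω = j} =
        P {ω | (X ω, Astar ω) ∈ S ∧ j ∈ Astar ω} / k) :
    P.map (fun ω => X ω (istar ω)) =
      volume.withDensity (fun y =>
        ENNReal.ofReal (gaussianPDFReal 0 1 y) *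
          ((k : ENNReal)⁻¹ *
            ∑ j : Fin p,
              condDistrib Astar (fun ω => X ω j) P y {A | j ∈ A})) := by
  classical
  -- notation
  set κ : Fin p → Kernel ℝ (Finset (Fin p)) :=
    fun j => condDistrib Astar (fun ω => X ω j) P with hκ
  have hXj : ∀ j : Fin p, Measurable fun ω => X ω j :=
    fun j => (measurable_pi_apply j).comp hX
  have hkpos : (k : ENNReal) ≠ 0 := by
    simpa using Nat.one_le_iff_ne_zero.mp hk
  -- measurability of the randomized k-max
  have hmeas : Measurable fun ω => X ω (istar ω) := by
    intro s hs
    have : (fun ω => X ω (istar ω)) ⁻¹' s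
        = ⋃ j : Fin p, ({ω | istar ω = j} ∩ (fun ω => X ω j) ⁻¹' s) := by
      ext ω
      simp only [Set.mem_preimage, Set.mem_iUnion, Set.mem_inter_iff, Set.mem_setOf_eq]
      constructor
      · intro h; exact ⟨istar ω, rfl, h⟩
      · rintro ⟨j, hj, h⟩; rw [hj]; exact h
    rw [this]
    exact MeasurableSet.iUnion fun j =>
      (histar (measurableSet_singleton j)).inter (hXj j hs)
  refine Measure.ext fun s hs => ?_
  -- the set where j ∈ A
  have htj : ∀ j : Fin p, MeasurableSet {A : Finset (Fin p) | j ∈ A} := fun j => trivial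
  -- Step A: decompose over the value of istar
  have stepA : (P.map fun ω => X ω (istar ω)) s
      = ∑ j : Fin p, P {ω | X ω j ∈ s ∧ istar ω = j} := by
    rw [Measure.map_apply hmeas hs]
    have hset : (fun ω => X ω (istar ω)) ⁻¹' s
        = ⋃ j : Fin p, {ω | X ω j ∈ s ∧ istar ω = j} := by
      ext ω
      simp only [Set.mem_preimage, Set.mem_iUnion, Set.mem_setOf_eq]
      constructor
      · intro h; exact ⟨istar ω, h, rfl⟩
      · rintro ⟨j, h, hj⟩; rw [hj]; exact h
    rw [hset, measure_iUnion]
    · rw [tsum_fintype]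
    · intro i j hij
      refine Set.disjoint_left.mpr fun ω hi hj => hij ?_
      rw [← hi.2, ← hj.2]
    · intro j
      exact ((hXj j hs).inter (histar (measurableSet_singleton j)))
  -- Step B: uniformity of istar on Astar
  have stepB : ∀ j : Fin p, P {ω | X ω j ∈ s ∧ istar ω = j}
      = P {ω | X ω j ∈ s ∧ j ∈ Astar ω} / k := by
    intro j
    have hS : MeasurableSet {q : (Fin p → ℝ) × Finset (Fin p) | q.1 j ∈ s} :=
      ((measurable_pi_apply j).comp measurable_fst) hs
    exact hunif j {q | q.1 j ∈ s} hS
  -- Step C: disintegration via condDistrib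
  have stepC : ∀ j : Fin p, P {ω | X ω j ∈ s ∧ j ∈ Astar ω}
      = ∫⁻ y in s, ENNReal.ofReal (gaussianPDFReal 0 1 y)
          * κ j y {A | j ∈ A} := by
    intro j
    have h1 : ∫⁻ a in (fun ω => X ω j) ⁻¹' s, κ j (X a j) {A | j ∈ A} ∂P
        = P ((fun ω => X ω j) ⁻¹' s ∩ Astar ⁻¹' {A | j ∈ A}) :=
      setLIntegral_preimage_condDistrib (hXj j) hAstar.aemeasurable (htj j) hs
    have hset : {ω | X ω j ∈ s ∧ j ∈ Astar ω}
        = (fun ω => X ω j) ⁻¹' s ∩ Astar ⁻¹' {A | j ∈ A} := rfl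
    have h2 : ∫⁻ y in s, κ j y {A | j ∈ A} ∂(P.map fun ω => X ω j)
        = ∫⁻ a in (fun ω => X ω j) ⁻¹' s, κ j (X a j) {A | j ∈ A} ∂P := by
      rw [Measure.restrict_map (hXj j) hs,
        lintegral_map (Kernel.measurable_coe _ (htj j)) (hXj j)]
    rw [hset, ← h1, ← h2, hvar j,
      gaussianReal_of_var_ne_zero 0 one_ne_zero, gaussianPDF_def,
      restrict_withDensity hs,
      lintegral_withDensity_eq_lintegral_mul _
        (measurable_gaussianPDFReal 0 1).ennreal_ofReal
        (Kernel.measurable_coe _ (htj j))]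
    rfl
  -- RHS as an integral
  rw [stepA, withDensity_apply _ hs]
  calc ∑ j : Fin p, P {ω | X ω j ∈ s ∧ istar ω = j}
      = ∑ j : Fin p, (∫⁻ y in s, ENNReal.ofReal (gaussianPDFReal 0 1 y)
          * κ j y {A | j ∈ A}) / k := by
        refine Finset.sum_congr rfl fun j _ => ?_
        rw [stepB j, stepC j]
    _ = (k : ENNReal)⁻¹ * ∑ j : Fin p, ∫⁻ y in s,
          ENNReal.ofReal (gaussianPDFReal 0 1 y) * κ j y {A | j ∈ A} := by
        rw [Finset.mul_sum]
        refine Finset.sum_congr rfl fun j _ => ?_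
        rw [ENNReal.div_eq_inv_mul]
    _ = (k : ENNReal)⁻¹ * ∫⁻ y in s, ∑ j : Fin p,
          ENNReal.ofReal (gaussianPDFReal 0 1 y) * κ j y {A | j ∈ A} := by
        rw [lintegral_finset_sum]
        intro j _
        exact ((measurable_gaussianPDFReal 0 1).ennreal_ofReal.mul
          (Kernel.measurable_coe _ (htj j)))
    _ = ∫⁻ y in s, ENNReal.ofReal (gaussianPDFReal 0 1 y)
          * ((k : ENNReal)⁻¹ * ∑ j : Fin p, κ j y {A | j ∈ A}) := by
        rw [← lintegral_const_mul _ (by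
          exact Finset.measurable_sum _ fun j _ =>
            ((measurable_gaussianPDFReal 0 1).ennreal_ofReal.mul
              (Kernel.measurable_coe _ (htj j))))]
        congr 1
        ext y
        rw [Finset.mul_sum, Finset.mul_sum]
        ring_nf
        rw [Finset.mul_sum]
        refine Finset.sum_congr rfl fun j _ => ?_
        ring
end

section
/- Let Z be a real random variable with Lebesgue density f satisfying f(y) ≤ M(y)·P(max_j X_j ≥ y) for all y, where M is the standard Gaussian Mills ratio and X ~ N(0,Σ) in ℝ^p with unit variance components. Then for all y ∈ ℝ and ε > 0, P(Z ∈ [y, y+ε]) ≤ 2ε(1 + E[‖X‖_∞]). -/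
open MeasureTheory ProbabilityTheory

/-- The standard Gaussian Mills ratio `M(y) = φ(y) / ∫_y^∞ φ(t) dt`. -/
noncomputable def millsRatio (y : ℝ) : ℝ :=
  gaussianPDFReal 0 1 y / ∫ t in Set.Ioi y, gaussianPDFReal 0 1 t

/-!
Bounding the tail `∫_t^∞ φ` from below by `φ(t) / (2(t + 1))` for `t ≥ 0` (integrate the
tangent-line bound `φ(s) ≥ φ(t)(1 - (s² - t²)/2)` over `[t, t + 1/(t + 1)]`) gives
`M(t) ≤ 2(1 + t⁺)`. Markov's inequality for `max_j X_j ≤ ‖X‖_∞` gives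
`t · P(max_j X_j ≥ t) ≤ E‖X‖_∞`, so the density of `Z` is bounded by `2(1 + E‖X‖_∞)`,
and integrating this bound over an interval of length `ε` gives the claim.
-/

open Real Set

lemma gaussianPDFReal_mul_one_sub_le (t s : ℝ) :
    gaussianPDFReal 0 1 t * (1 - (s ^ 2 - t ^ 2) / 2) ≤ gaussianPDFReal 0 1 s := by
  have hexp : gaussianPDFReal 0 1 s = gaussianPDFReal 0 1 t * rexp (-(s ^ 2 - t ^ 2) / 2) := by
    rw [gaussianPDFReal, gaussianPDFReal, mul_assoc _ (rexp _), ← Real.exp_add]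
    push_cast
    ring_nf
  rw [hexp]
  gcongr
  · exact gaussianPDFReal_nonneg 0 1 t
  · linarith [add_one_le_exp (-(s ^ 2 - t ^ 2) / 2)]

lemma intervalIntegral_one_sub_sq_sub_sq_div_two (t h : ℝ) :
    ∫ s in t..t + h, (1 - (s ^ 2 - t ^ 2) / 2) = h - t * h ^ 2 / 2 - h ^ 3 / 6 := by
  have hcont : Continuous fun s : ℝ => (s ^ 2 - t ^ 2) / 2 := by fun_prop
  rw [intervalIntegral.integral_sub (by simp) (hcont.intervalIntegrable _ _),
    intervalIntegral.integral_div, intervalIntegral.integral_sub (by simp) (by simp)]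
  simp only [integral_pow, intervalIntegral.integral_const, smul_eq_mul]
  ring

lemma gaussianPDFReal_div_le_integral_Ioi {t : ℝ} (ht : 0 ≤ t) :
    gaussianPDFReal 0 1 t / (2 * (t + 1)) ≤ ∫ s in Ioi t, gaussianPDFReal 0 1 s := by
  set h := (t + 1)⁻¹ with h_def
  have hh : 0 < h := by positivity
  have hh1 : h ≤ 1 := inv_le_one_of_one_le₀ (by linarith)
  have hth : t * h = 1 - h := by rw [h_def]; field_simp; ring
  have hφ := gaussianPDFReal_nonneg 0 1 t
  have hpoly : h / 2 ≤ ∫ s in t..t + h, (1 - (s ^ 2 - t ^ 2) / 2) := by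
    rw [intervalIntegral_one_sub_sq_sub_sq_div_two]
    nlinarith [mul_pos hh hh]
  calc gaussianPDFReal 0 1 t / (2 * (t + 1))
      = gaussianPDFReal 0 1 t * (h / 2) := by rw [h_def]; field_simp
    _ ≤ gaussianPDFReal 0 1 t * ∫ s in t..t + h, (1 - (s ^ 2 - t ^ 2) / 2) := by gcongr
    _ = ∫ s in t..t + h, gaussianPDFReal 0 1 t * (1 - (s ^ 2 - t ^ 2) / 2) :=
        (intervalIntegral.integral_const_mul _ _).symm
    _ ≤ ∫ s in t..t + h, gaussianPDFReal 0 1 s :=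
        intervalIntegral.integral_mono_on (by linarith) (Continuous.intervalIntegrable
          (by fun_prop) _ _) (integrable_gaussianPDFReal 0 1).intervalIntegrable
          fun s _ => gaussianPDFReal_mul_one_sub_le t s
    _ = ∫ s in Ioc t (t + h), gaussianPDFReal 0 1 s := intervalIntegral.integral_of_le (by linarith)
    _ ≤ ∫ s in Ioi t, gaussianPDFReal 0 1 s :=
        setIntegral_mono_set (integrable_gaussianPDFReal 0 1).integrableOn
          (.of_forall fun s => gaussianPDFReal_nonneg 0 1 s) Ioc_subset_Ioi_self.eventuallyLE

lemma millsRatio_le_of_nonneg {t : ℝ} (ht : 0 ≤ t) : millsRatio t ≤ 2 * (t + 1) := by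
  have hφ := gaussianPDFReal_pos 0 1 t one_ne_zero
  have htail := gaussianPDFReal_div_le_integral_Ioi ht
  rw [millsRatio, div_le_iff₀ ((by positivity : (0 : ℝ) < _).trans_le htail)]
  rwa [div_le_iff₀' (by positivity)] at htail

lemma gaussianPDFReal_le_gaussianPDFReal_mean (μ : ℝ) (v : NNReal) (x : ℝ) :
    gaussianPDFReal μ v x ≤ gaussianPDFReal μ v μ := by
  rw [gaussianPDFReal, gaussianPDFReal, sub_self]
  gcongr _ * rexp ?_
  rw [zero_pow two_ne_zero, neg_zero, zero_div, neg_div, neg_nonpos]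
  positivity

lemma millsRatio_le_two_of_nonpos {t : ℝ} (ht : t ≤ 0) : millsRatio t ≤ 2 := by
  have htail0 : 0 < ∫ s in Ioi 0, gaussianPDFReal 0 1 s :=
    lt_of_lt_of_le (by simpa using gaussianPDFReal_pos 0 1 0 one_ne_zero)
      (gaussianPDFReal_div_le_integral_Ioi le_rfl)
  calc millsRatio t ≤ millsRatio 0 :=
        div_le_div₀ (gaussianPDFReal_nonneg 0 1 0)
          (gaussianPDFReal_le_gaussianPDFReal_mean 0 1 t) htail0
          (setIntegral_mono_set (integrable_gaussianPDFReal 0 1).integrableOn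
            (.of_forall fun s => gaussianPDFReal_nonneg 0 1 s) (Ioi_subset_Ioi ht).eventuallyLE)
    _ ≤ 2 := by simpa using millsRatio_le_of_nonneg le_rfl

lemma iSup_apply_le_norm {ι : Type*} [Fintype ι] (x : ι → ℝ) : ⨆ j, x j ≤ ‖x‖ :=
  Real.iSup_le (fun j => (le_abs_self (x j)).trans (norm_le_pi_norm x j)) (norm_nonneg x)

lemma mul_measureReal_le_iSup_le_integral_norm {ι : Type*} [Fintype ι]
    {μ : Measure (ι → ℝ)} [IsFiniteMeasure μ] (hμ : Integrable (fun x => ‖x‖) μ)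
    {t : ℝ} (ht : 0 ≤ t) :
    t * μ.real {x | t ≤ ⨆ j, x j} ≤ ∫ x, ‖x‖ ∂μ :=
  calc t * μ.real {x | t ≤ ⨆ j, x j} ≤ t * μ.real {x | t ≤ ‖x‖} :=
        mul_le_mul_of_nonneg_left
          (measureReal_mono fun x (hx : t ≤ _) => hx.trans (iSup_apply_le_norm x)) ht
    _ ≤ ∫ x, ‖x‖ ∂μ := mul_meas_ge_le_integral_of_nonneg (.of_forall fun x => norm_nonneg x) hμ t

lemma millsRatio_mul_measureReal_iSup_le {ι : Type*} [Fintype ι]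
    {μ : Measure (ι → ℝ)} [IsProbabilityMeasure μ] (hμ : Integrable (fun x => ‖x‖) μ) (t : ℝ) :
    millsRatio t * μ.real {x | t ≤ ⨆ j, x j} ≤ 2 * (1 + ∫ x, ‖x‖ ∂μ) := by
  have hI : 0 ≤ ∫ x, ‖x‖ ∂μ := integral_nonneg fun x => norm_nonneg x
  have hP0 : 0 ≤ μ.real {x | t ≤ ⨆ j, x j} := measureReal_nonneg
  have hP1 : μ.real {x | t ≤ ⨆ j, x j} ≤ 1 := measureReal_le_one
  rcases le_total t 0 with ht | ht
  · nlinarith [millsRatio_le_two_of_nonpos ht]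
  · nlinarith [millsRatio_le_of_nonneg ht, mul_measureReal_le_iSup_le_integral_norm hμ ht]

lemma integrable_norm_of_map_eval_eq_gaussianReal {ι : Type*} [Fintype ι]
    {μ : Measure (ι → ℝ)} {m : ι → ℝ} {v : ι → NNReal}
    (hμ : ∀ j, μ.map (fun x => x j) = gaussianReal (m j) (v j)) :
    Integrable (fun x => ‖x‖) μ := by
  refine (integrable_pi_iff.2 fun j => ?_).norm
  have h := (memLp_id_gaussianReal (μ := m j) (v := v j) 1).integrable le_rfl
  rw [← hμ j] at h
  exact (integrable_map_measure aestronglyMeasurable_id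
    (measurable_pi_apply j).aemeasurable).1 h

lemma measure_preimage_Icc_le_of_density_le {Ω : Type*} [MeasurableSpace Ω] {P : Measure Ω}
    {Z : Ω → ℝ} (hZ : Measurable Z) {f : ℝ → ℝ}
    (hdens : P.map Z = volume.withDensity (fun y => ENNReal.ofReal (f y)))
    {C : ℝ} (hf : ∀ y, f y ≤ C) {a b : ℝ} (hab : a ≤ b) :
    P (Z ⁻¹' Icc a b) ≤ ENNReal.ofReal (C * (b - a)) :=
  calc P (Z ⁻¹' Icc a b) = ∫⁻ y in Icc a b, ENNReal.ofReal (f y) := by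
        rw [← Measure.map_apply hZ measurableSet_Icc, hdens,
          withDensity_apply _ measurableSet_Icc]
    _ ≤ ∫⁻ _ in Icc a b, ENNReal.ofReal C :=
        lintegral_mono fun y => ENNReal.ofReal_le_ofReal (hf y)
    _ = ENNReal.ofReal (C * (b - a)) := by
        rw [setLIntegral_const, Real.volume_Icc, ENNReal.ofReal_mul' (by linarith)]

theorem anticoncentration_of_millsRatio_bound_general
    {Ω : Type*} [MeasurableSpace Ω] (P : Measure Ω)
    (Z : Ω → ℝ) (hZ : Measurable Z)
    {p : ℕ} (μ : Measure (Fin p → ℝ)) [IsProbabilityMeasure μ]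
    (hvar : ∀ j : Fin p, μ.map (fun x => x j) = gaussianReal 0 1)
    (f : ℝ → ℝ)
    (hdens : P.map Z = volume.withDensity (fun y => ENNReal.ofReal (f y)))
    (hfle : ∀ y : ℝ, f y ≤ millsRatio y * (μ {x | y ≤ ⨆ j, x j}).toReal) :
    ∀ (y ε : ℝ), 0 < ε →
      P {ω | Z ω ∈ Set.Icc y (y + ε)} ≤
        ENNReal.ofReal (2 * ε * (1 + ∫ x, ‖x‖ ∂μ)) := by
  intro y ε hε
  have hf : ∀ t, f t ≤ 2 * (1 + ∫ x, ‖x‖ ∂μ) := fun t => (hfle t).trans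
    (millsRatio_mul_measureReal_iSup_le (integrable_norm_of_map_eval_eq_gaussianReal hvar) t)
  calc P {ω | Z ω ∈ Icc y (y + ε)}
      ≤ ENNReal.ofReal (2 * (1 + ∫ x, ‖x‖ ∂μ) * (y + ε - y)) :=
        measure_preimage_Icc_le_of_density_le hZ hdens hf (by linarith)
    _ = ENNReal.ofReal (2 * ε * (1 + ∫ x, ‖x‖ ∂μ)) := by ring_nf

/-- If a real random variable `Z` has a Lebesgue density `f` dominated as
`f(y) ≤ M(y) · P(max_j X_j ≥ y)` with `X ~ N(0,Σ)` in `ℝ^p` with unit variance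
components, then `P(Z ∈ [y, y+ε]) ≤ 2ε(1 + E[‖X‖_∞])` for all `y` and `ε > 0`. -/
theorem anticoncentration_of_millsRatio_bound
    {Ω : Type*} [MeasurableSpace Ω] (P : Measure Ω) [IsProbabilityMeasure P]
    (Z : Ω → ℝ) (hZ : Measurable Z)
    {p : ℕ} (hp : 0 < p) (μ : Measure (Fin p → ℝ)) [IsProbabilityMeasure μ]
    (hGauss : IsCenteredGaussianLaw μ)
    (hvar : ∀ j : Fin p, μ.map (fun x => x j) = gaussianReal 0 1)
    (f : ℝ → ℝ)
    (hdens : P.map Z = volume.withDensity (fun y => ENNReal.ofReal (f y)))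
    (hfle : ∀ y : ℝ, f y ≤ millsRatio y * (μ {x | y ≤ ⨆ j, x j}).toReal) :
    ∀ (y ε : ℝ), 0 < ε →
      P {ω | Z ω ∈ Set.Icc y (y + ε)} ≤
        ENNReal.ofReal (2 * ε * (1 + ∫ x, ‖x‖ ∂μ)) :=
  anticoncentration_of_millsRatio_bound_general P Z hZ μ hvar f hdens hfle
end
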